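/- For all c ∈ [0,1] and d ∈ [0, (1-c)/(2-c)], the quantity 1 + ((1+c²)d + c - c²)/((1-c)d + c) is at most 17/8, with equality when c = 1/4 and d = (1-c)/(2-c) = 3/7. -/

import Mathlib

/-!
Clearing the denominator, the bound becomes `g(d) ≥ 0` for `g(d) = (1 - 9c - 8c²) d + c + 8c²`.
With the slack `s = 1 - c - (2 - c) d ≥ 0` of the constraint on `d`,
`g(d) = 16c² s + (1 - c)(1 - 4c)² d + c(1 - 4c)²`,
a sum of nonnegative terms, all of which vanish at `c = 1/4`, `d = 3/7`.
-/

theorem lof_numerator_le_nine_eighths_mul {c d : ℝ} (hc₀ : 0 ≤ c) (hc₁ : c ≤ 1) (hd : 0 ≤ d)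
    (hdc : d * (2 - c) ≤ 1 - c) :
    (1 + c ^ 2) * d + c - c ^ 2 ≤ 9 / 8 * ((1 - c) * d + c) := by
  have hsq := sq_nonneg (1 - 4 * c)
  linarith [mul_nonneg (sq_nonneg c) (sub_nonneg.2 hdc),
    mul_nonneg (mul_nonneg hd (sub_nonneg.2 hc₁)) hsq, mul_nonneg hc₀ hsq]

theorem lof_ratio_le_nine_eighths {c d : ℝ} (hc₀ : 0 ≤ c) (hc₁ : c ≤ 1) (hd : 0 ≤ d)
    (hdc : d ≤ (1 - c) / (2 - c)) :
    ((1 + c ^ 2) * d + c - c ^ 2) / ((1 - c) * d + c) ≤ 9 / 8 := by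
  have hdc' : d * (2 - c) ≤ 1 - c := (le_div_iff₀ (by linarith)).1 hdc
  -- `div_le_of_le_mul₀` also covers the junk case `c = d = 0`, where the ratio is `0 / 0 = 0`.
  exact div_le_of_le_mul₀ (add_nonneg (mul_nonneg (sub_nonneg.2 hc₁) hd) hc₀) (by norm_num)
    (lof_numerator_le_nine_eighths_mul hc₀ hc₁ hd hdc')

theorem lof_final_bound :
    (∀ c d : ℝ, c ∈ Set.Icc (0:ℝ) 1 → 0 ≤ d → d ≤ (1 - c) / (2 - c) →
      1 + ((1 + c^2) * d + c - c^2) / ((1 - c) * d + c) ≤ 17 / 8) ∧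
    (1 + ((1 + (1/4:ℝ)^2) * (3/7) + 1/4 - (1/4)^2) / ((1 - 1/4) * (3/7) + 1/4)
        = 17 / 8) ∧
    ((1 - (1/4:ℝ)) / (2 - 1/4) = 3 / 7) := by
  refine ⟨fun c d ⟨hc₀, hc₁⟩ hd hdc => ?_, by norm_num, by norm_num⟩
  linarith [lof_ratio_le_nine_eighths hc₀ hc₁ hd hdc]
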